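/- arXiv:1306.0741 — 9 statements merged into one kernel-verified Lean document; each statement's English description precedes it below -/
import Mathlib

section
/- For every DMTS S, one has S ≡ₜ db(S), i.e. the DMTS S and the NAA db(S) have exactly the same set of LTS implementations, where db(S) = (S, S⁰, Tran) is the NAA with Tran(s) = { M a finite subset of Σ × S | for all (a, t) ∈ M, s ⤏ᵃ t, and for every N with s ⟶ N, M ∩ N ≠ ∅ }. -/
/-- A labelled transition system over alphabet `A`, with an image-finite
transition relation. -/
structure LTS (A : Type) : Type 1 where
  State : Type
  init : State
  trans : State → A → Set State
  image_finite : ∀ s a, (trans s a).Finite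
/-- A nondeterministic acceptance automaton over alphabet `A`. -/
structure NAA (A : Type) : Type 1 where
  State : Type
  init : Set State
  Tran : State → Set (Set (A × State))

namespace NAA

variable {A : Type}

/-- Modal refinement relation between two NAA. -/
def Refinement (S1 S2 : NAA A) (R : Set (S1.State × S2.State)) : Prop :=
  ∀ p ∈ R, ∀ M1 ∈ S1.Tran p.1, ∃ M2 ∈ S2.Tran p.2,
    (∀ q ∈ M1, ∃ r ∈ M2, q.1 = r.1 ∧ (q.2, r.2) ∈ R) ∧
    (∀ r ∈ M2, ∃ q ∈ M1, q.1 = r.1 ∧ (q.2, r.2) ∈ R)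

/-- `S1 ≤ₘ S2`: there is an initialised modal refinement from `S1` to `S2`. -/
def Refines (S1 S2 : NAA A) : Prop :=
  ∃ R, Refinement S1 S2 R ∧ ∀ s ∈ S1.init, ∃ t ∈ S2.init, (s, t) ∈ R

/-- `S1 ≡ₘ S2`: modal refinement in both directions. -/
def Equiv (S1 S2 : NAA A) : Prop := Refines S1 S2 ∧ Refines S2 S1

/-- The defining finiteness conditions of NAA: the set of initial states is
finite and every admissible transition set is a finite subset of `A × State`. -/
def Wellformed (S : NAA A) : Prop :=
  S.init.Finite ∧ ∀ s, ∀ M ∈ S.Tran s, M.Finite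

end NAA
/-- An (image-finite) LTS viewed as an NAA: a singleton set of initial states and
a single admissible transition set per state. -/
def LTS.toNAA {A : Type} (I : LTS A) : NAA A where
  State := I.State
  init := {I.init}
  Tran := fun s => {M | M = {p : A × I.State | p.2 ∈ I.trans s p.1}}

/-- The implementations (LTS models) of an NAA. -/
def NAA.impl {A : Type} (S : NAA A) : Set (LTS A) := {I | I.toNAA.Refines S}
/-- A disjunctive modal transition system over alphabet `A`. -/
structure DMTS (A : Type) : Type 1 where
  State : Type
  init : Set State
  may : State → A → Set State
  must : State → Set (Set (A × State))

namespace DMTS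

variable {A : Type}

/-- Modal refinement relation between two DMTS. -/
def Refinement (S1 S2 : DMTS A) (R : Set (S1.State × S2.State)) : Prop :=
  ∀ p ∈ R,
    (∀ a, ∀ t1 ∈ S1.may p.1 a, ∃ t2 ∈ S2.may p.2 a, (t1, t2) ∈ R) ∧
    (∀ N2 ∈ S2.must p.2, ∃ N1 ∈ S1.must p.1,
      ∀ q ∈ N1, ∃ t2, (q.1, t2) ∈ N2 ∧ (q.2, t2) ∈ R)

/-- `S1 ≤ₘ S2`: there is an initialised modal refinement from `S1` to `S2`. -/
def Refines (S1 S2 : DMTS A) : Prop :=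
  ∃ R, Refinement S1 S2 R ∧ ∀ s ∈ S1.init, ∃ t ∈ S2.init, (s, t) ∈ R

/-- `S1 ≡ₘ S2`: modal refinement in both directions. -/
def Equiv (S1 S2 : DMTS A) : Prop := Refines S1 S2 ∧ Refines S2 S1

/-- The defining conditions of DMTS: finitely many initial states, image-finite
may-transition relation, and every element of a must-set is a may-transition. -/
def Wellformed (S : DMTS A) : Prop :=
  S.init.Finite ∧ (∀ s a, (S.may s a).Finite) ∧
  ∀ s, ∀ N ∈ S.must s, ∀ p ∈ N, p.2 ∈ S.may s p.1

end DMTS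
/-- An (image-finite) LTS viewed as a DMTS: a singleton set of initial states and
a singleton must-set for each transition. -/
def LTS.toDMTS {A : Type} (I : LTS A) : DMTS A where
  State := I.State
  init := {I.init}
  may := I.trans
  must := fun s => {N | ∃ a, ∃ t ∈ I.trans s a, N = {(a, t)}}

/-- The implementations (LTS models) of a DMTS. -/
def DMTS.impl {A : Type} (S : DMTS A) : Set (LTS A) := {I | I.toDMTS.Refines S}

/-- The translation `db` from DMTS to NAA: `Tran s` consists of all finite sets
`M ⊆ A × State` of allowed transitions such that every element of `M` is a
may-transition and `M` meets every must-set of `s`. -/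
def DMTS.db {A : Type} (S : DMTS A) : NAA A where
  State := S.State
  init := S.init
  Tran := fun s => {M | M.Finite ∧ (∀ p ∈ M, p.2 ∈ S.may s p.1) ∧
    ∀ N ∈ S.must s, (M ∩ N).Nonempty}

/-! The same relation witnesses both refinements. An LTS state `s₁` has exactly one NAA
transition set, the set of all its transitions. Given a DMTS refinement, `db S` answers it at
`s₂` with the may-transitions of `s₂` that simulate some transition of `s₁`: this set is finite
because the alphabet is finite and `may` is image-finite, and it meets every must-set because
the must-clause of the refinement produces a matching element of it (must-sets consist of
may-transitions). Conversely, an answer `M₂ ∈ Tran s₂` gives the may-clause since `M₂ ⊆ may`,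
and the must-clause from any element of `M₂ ∩ N₂` together with the transition of `s₁` it
matches.
-/

theorem Set.finite_setOf_snd_mem {α β : Type*} [Finite α] {f : α → Set β}
    (hf : ∀ a, (f a).Finite) : {p : α × β | p.2 ∈ f p.1}.Finite :=
  (Set.finite_iUnion fun a => (hf a).image (Prod.mk a)).subset fun ⟨a, b⟩ hb =>
    Set.mem_iUnion.2 ⟨a, b, hb, rfl⟩

namespace DMTS

variable {A : Type} {S : DMTS A} {I : LTS A} {R : Set (I.State × S.State)}

def simulatingMay (S : DMTS A) (I : LTS A) (R : Set (I.State × S.State))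
    (s₁ : I.State) (s₂ : S.State) : Set (A × S.State) :=
  {q | q.2 ∈ S.may s₂ q.1 ∧ ∃ t₁ ∈ I.trans s₁ q.1, (t₁, q.2) ∈ R}

theorem simulatingMay_mem_db_tran [Finite A] (hS : S.Wellformed)
    (hR : I.toDMTS.Refinement S R) {s₁ : I.State} {s₂ : S.State} (hs : (s₁, s₂) ∈ R) :
    simulatingMay S I R s₁ s₂ ∈ S.db.Tran s₂ := by
  refine ⟨(Set.finite_setOf_snd_mem (hS.2.1 s₂)).subset fun q hq => hq.1,
    fun q hq => hq.1, fun N hN => ?_⟩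
  obtain ⟨_, ⟨a, t₁, ht₁, rfl⟩, hmatch⟩ := (hR _ hs).2 N hN
  obtain ⟨t₂, ht₂N, ht₂R⟩ := hmatch (a, t₁) rfl
  exact ⟨(a, t₂), ⟨hS.2.2 s₂ N hN (a, t₂) ht₂N, t₁, ht₁, ht₂R⟩, ht₂N⟩

theorem Refinement.toNAA_db [Finite A] (hS : S.Wellformed) (hR : I.toDMTS.Refinement S R) :
    I.toNAA.Refinement S.db R := by
  rintro ⟨s₁, s₂⟩ hs M₁ rfl
  refine ⟨simulatingMay S I R s₁ s₂, simulatingMay_mem_db_tran hS hR hs, ?_, ?_⟩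
  · rintro ⟨a, t₁⟩ ht₁
    obtain ⟨t₂, ht₂, ht₁₂⟩ := (hR _ hs).1 a t₁ ht₁
    exact ⟨(a, t₂), ⟨ht₂, t₁, ht₁, ht₁₂⟩, rfl, ht₁₂⟩
  · rintro ⟨a, t₂⟩ ⟨-, t₁, ht₁, ht₁₂⟩
    exact ⟨(a, t₁), ht₁, rfl, ht₁₂⟩

theorem Refinement.of_toNAA_db (hR : I.toNAA.Refinement S.db R) :
    I.toDMTS.Refinement S R := by
  rintro ⟨s₁, s₂⟩ hs
  obtain ⟨M₂, ⟨-, hmay, hmust⟩, hfwd, hbwd⟩ := hR _ hs _ rfl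
  refine ⟨fun a t₁ ht₁ => ?_, fun N₂ hN₂ => ?_⟩
  · obtain ⟨⟨_, t₂⟩, hM₂, rfl, ht₁₂⟩ := hfwd (a, t₁) ht₁
    exact ⟨t₂, hmay _ hM₂, ht₁₂⟩
  · obtain ⟨⟨a, t₂⟩, hM₂, hN₂⟩ := hmust N₂ hN₂
    obtain ⟨⟨a, t₁⟩, ht₁, rfl, ht₁₂⟩ := hbwd (a, t₂) hM₂
    exact ⟨{(a, t₁)}, ⟨a, t₁, ht₁, rfl⟩, fun q hq => hq ▸ ⟨t₂, hN₂, ht₁₂⟩⟩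

theorem refinement_iff_toNAA_db [Finite A] (hS : S.Wellformed) :
    I.toDMTS.Refinement S R ↔ I.toNAA.Refinement S.db R :=
  ⟨Refinement.toNAA_db hS, Refinement.of_toNAA_db⟩

end DMTS

/-- every DMTS `S` has exactly the same LTS implementations as the
NAA `db S`. -/
theorem statement2 (A : Type) [Fintype A] (S : DMTS A) (hS : S.Wellformed) :
    S.impl = S.db.impl := by
  ext I
  exact exists_congr fun _ => and_congr_left' (DMTS.refinement_iff_toNAA_db hS)
end

section
/- For every NAA S, one has S ≡ₜ bd(S), i.e. the NAA S and the DMTS bd(S) have exactly the same set of LTS implementations, where bd(S) = (T, T⁰, ⤏, ⟶) is the DMTS with T = { M | M ∈ Tran(s) for some s ∈ S }, T⁰ = { M ∈ Tran(s⁰) | s⁰ ∈ S⁰ }, ⟶ = { (M, {(a, M′) | M′ ∈ Tran(s′)}) | (a, s′) ∈ M }, and ⤏ = { (t, a, t′) | t ∈ T and there is (t, N) ∈ ⟶ with (a, t′) ∈ N }. -/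
/-- The translation `bd` from NAA to DMTS: states are the admissible transition
sets `M ∈ Tran s` of the NAA; initial states are the admissible sets of initial
NAA states; for each `(a, s') ∈ M` there is a must-set `{(a, M') | M' ∈ Tran s'}`;
and the may-transitions are those underlying some must-set. -/
def NAA.bd {A : Type} (S : NAA A) : DMTS A where
  State := {M : Set (A × S.State) // ∃ s, M ∈ S.Tran s}
  init := {M | ∃ s ∈ S.init, M.1 ∈ S.Tran s}
  may := fun M a => {M' | ∃ p ∈ M.1, p.1 = a ∧ M'.1 ∈ S.Tran p.2}
  must := fun M => {N | ∃ p ∈ M.1,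
    N = {q : A × {M : Set (A × S.State) // ∃ s, M ∈ S.Tran s} |
      q.1 = p.1 ∧ q.2.1 ∈ S.Tran p.2}}

/-!
A state `M` of `bd S` is an admissible transition set chosen at some state of `S`. Since an
LTS offers a single transition set at each state, an NAA refinement `R` of an LTS `I` into `S`
amounts to choosing at every related pair `(i, s)` some `M ∈ Tran s` that matches the
transitions of `i` in both directions up to `R`. Relating `i` to every such matching `M` is a
DMTS refinement of `I` into `bd S`: may-transitions of `i` are covered by the forward half of
the matching, and the must-set of `bd S` generated by `(a, s') ∈ M` is met by the transition of
`i` that the backward half provides. Conversely, from a DMTS refinement `R'` into `bd S` one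
recovers an NAA refinement by relating `i` to `s` whenever `R'` relates `i` to some `M ∈ Tran s`.
-/

namespace NAA

variable {A : Type} {I : LTS A} {S : NAA A}

def MatchesTrans (R : Set (I.State × S.State)) (i : I.State) (M : Set (A × S.State)) : Prop :=
  (∀ a, ∀ t ∈ I.trans i a, ∃ q ∈ M, q.1 = a ∧ (t, q.2) ∈ R) ∧
    ∀ q ∈ M, ∃ t ∈ I.trans i q.1, (t, q.2) ∈ R

theorem exists_matchesTrans_of_refinement {R : Set (I.State × S.State)}
    (hR : Refinement I.toNAA S R) {i : I.State} {s : S.State} (his : (i, s) ∈ R) :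
    ∃ M ∈ S.Tran s, MatchesTrans R i M := by
  obtain ⟨M, hM, hfwd, hbwd⟩ := hR (i, s) his {p | p.2 ∈ I.trans i p.1} rfl
  refine ⟨M, hM, fun a t ht => ?_, fun q hq => ?_⟩
  · obtain ⟨q, hq, hqa, hqR⟩ := hfwd (a, t) ht
    exact ⟨q, hq, hqa.symm, hqR⟩
  · obtain ⟨⟨a, t⟩, ht, rfl, htR⟩ := hbwd q hq
    exact ⟨t, ht, htR⟩

theorem refinement_bd_of_refinement {R : Set (I.State × S.State)}
    (hR : Refinement I.toNAA S R) :
    DMTS.Refinement I.toDMTS S.bd {p | MatchesTrans R p.1 p.2.1} := by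
  have lift : ∀ {t s}, (t, s) ∈ R →
      ∃ M : S.bd.State, M.1 ∈ S.Tran s ∧ MatchesTrans R t M.1 := fun hts => by
    obtain ⟨M, hM, hmatch⟩ := exists_matchesTrans_of_refinement hR hts
    exact ⟨⟨M, _, hM⟩, hM, hmatch⟩
  rintro ⟨i, M⟩ ⟨hfwd, hbwd⟩
  refine ⟨fun a t ht => ?_, ?_⟩
  · obtain ⟨q, hq, hqa, hqR⟩ := hfwd a t ht
    obtain ⟨M', hM', hmatch⟩ := lift hqR
    exact ⟨M', ⟨q, hq, hqa, hM'⟩, hmatch⟩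
  · rintro _ ⟨q, hq, rfl⟩
    obtain ⟨t, ht, htR⟩ := hbwd q hq
    obtain ⟨M', hM', hmatch⟩ := lift htR
    refine ⟨{(q.1, t)}, ⟨q.1, t, ht, rfl⟩, ?_⟩
    rintro _ rfl
    exact ⟨M', ⟨rfl, hM'⟩, hmatch⟩

theorem refines_bd_of_refines (h : I.toNAA.Refines S) : I.toDMTS.Refines S.bd := by
  obtain ⟨R, hR, hinit⟩ := h
  refine ⟨_, refinement_bd_of_refinement hR, ?_⟩
  rintro _ rfl
  obtain ⟨s, hs, his⟩ := hinit I.init rfl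
  obtain ⟨M, hM, hmatch⟩ := exists_matchesTrans_of_refinement hR his
  exact ⟨⟨M, s, hM⟩, ⟨s, hs, hM⟩, hmatch⟩

def ofBdRelation (R' : Set (I.State × S.bd.State)) : Set (I.State × S.State) :=
  {p | ∃ M, ∃ h : M ∈ S.Tran p.2, (p.1, (⟨M, p.2, h⟩ : S.bd.State)) ∈ R'}

theorem refinement_of_refinement_bd {R' : Set (I.State × S.bd.State)}
    (hR' : DMTS.Refinement I.toDMTS S.bd R') :
    Refinement I.toNAA S (ofBdRelation R') := by
  rintro ⟨i, s⟩ ⟨M, hM, hiM⟩ _ rfl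
  obtain ⟨hmay, hmust⟩ := hR' (i, ⟨M, s, hM⟩) hiM
  refine ⟨M, hM, fun q hq => ?_, fun r hr => ?_⟩
  · obtain ⟨M', ⟨p, hp, hpa, hpM'⟩, hqM'⟩ := hmay q.1 q.2 hq
    exact ⟨p, hp, hpa.symm, M'.1, hpM', hqM'⟩
  · obtain ⟨_, ⟨a, t, ht, rfl⟩, hmatch⟩ := hmust _ ⟨r, hr, rfl⟩
    obtain ⟨M', ⟨hra, hrM'⟩, htM'⟩ := hmatch (a, t) rfl
    exact ⟨(a, t), ht, hra, M'.1, hrM', htM'⟩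

theorem refines_of_refines_bd (h : I.toDMTS.Refines S.bd) : I.toNAA.Refines S := by
  obtain ⟨R', hR', hinit⟩ := h
  refine ⟨_, refinement_of_refinement_bd hR', ?_⟩
  rintro _ rfl
  obtain ⟨M, ⟨s, hs, hM⟩, hiM⟩ := hinit I.init rfl
  exact ⟨s, hs, M.1, hM, hiM⟩

end NAA

theorem statement3_general (A : Type) (S : NAA A) :
    S.impl = S.bd.impl :=
  Set.ext fun _ => ⟨NAA.refines_bd_of_refines, NAA.refines_of_refines_bd⟩

/-- every NAA `S` has exactly the same LTS implementations as the
DMTS `bd S`. -/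
theorem statement3 (A : Type) [Fintype A] (S : NAA A) (hS : S.Wellformed) :
    S.impl = S.bd.impl :=
  statement3_general A S
end

section
/- For every finite NAA S = (S, S⁰, Tran), one has S ≡ₜ bh(S): an LTS implements the NAA S if and only if it models the νHML formula bh(S) = (S, S⁰, Δ_Tran), where the variables are the states of S and Δ_Tran(s) = ⋁_{M ∈ Tran(s)} ( ⋀_{(a,t) ∈ M} ⟨a⟩t ∧ ⋀_{a ∈ Σ} [a] ( ⋁_{u ∈ M_a} u ) ), with M_a = { t | (a, t) ∈ M }. -/
/-- Hennessy-Milner logic formulae over alphabet `A` and variables `X`. -/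
inductive HML (A X : Type) : Type
  | tt : HML A X
  | ff : HML A X
  | var : X → HML A X
  | and : HML A X → HML A X → HML A X
  | or : HML A X → HML A X → HML A X
  | dia : A → HML A X → HML A X
  | box : A → HML A X → HML A X

/-- Semantics of an HML formula over an LTS `I`, relative to an assignment `σ`. -/
def HML.sem {A X : Type} (I : LTS A) (σ : X → Set I.State) : HML A X → Set I.State
  | .tt => Set.univ
  | .ff => ∅
  | .var x => σ x
  | .and φ ψ => HML.sem I σ φ ∩ HML.sem I σ ψ
  | .or φ ψ => HML.sem I σ φ ∪ HML.sem I σ ψ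
  | .dia a φ => {s | ∃ t ∈ I.trans s a, t ∈ HML.sem I σ φ}
  | .box a φ => {s | ∀ t ∈ I.trans s a, t ∈ HML.sem I σ φ}

/-- An (initialised) νHML formula: variables, initial variables and a declaration. -/
structure NuHML (A : Type) : Type 1 where
  Var : Type
  init : Set Var
  decl : Var → HML A Var

/-- Greatest-fixed-point semantics of a declaration over an LTS `I`: the union of
all assignments `σ` with `σ x ⊆ ⟦Δ(x)⟧σ` for all `x`. -/
def NuHML.declSem {A : Type} (Δ : NuHML A) (I : LTS A) : Δ.Var → Set I.State :=
  fun x => {s | ∃ σ : Δ.Var → Set I.State,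
    (∀ y, σ y ⊆ HML.sem I σ (Δ.decl y)) ∧ s ∈ σ x}

/-- The set of LTS models of a νHML formula. -/
def NuHML.models {A : Type} (Δ : NuHML A) : Set (LTS A) :=
  {I | ∃ x0 ∈ Δ.init, I.init ∈ Δ.declSem I x0}

/-- Finite disjunction of HML formulae (the empty disjunction is `ff`). -/
def bigOr {A X : Type} (l : List (HML A X)) : HML A X := l.foldr HML.or HML.ff

/-- Finite conjunction of HML formulae (the empty conjunction is `tt`). -/
def bigAnd {A X : Type} (l : List (HML A X)) : HML A X := l.foldr HML.and HML.tt

/-- The translation `bh` from finite NAA to νHML: variables are the states, and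
`Δ_Tran s = ⋁_{M ∈ Tran s} (⋀_{(a,t) ∈ M} ⟨a⟩t ∧ ⋀_{a ∈ Σ} [a] (⋁_{u ∈ M_a} u))`. -/
noncomputable def NAA.bh {A : Type} [Fintype A] (S : NAA A) [Finite S.State] :
    NuHML A where
  Var := S.State
  init := S.init
  decl := fun s => bigOr ((S.Tran s).toFinite.toFinset.toList.map (fun M =>
    HML.and
      (bigAnd (M.toFinite.toFinset.toList.map (fun p => HML.dia p.1 (HML.var p.2))))
      (bigAnd ((Finset.univ : Finset A).toList.map (fun a =>
        HML.box a (bigOr (({u | (a, u) ∈ M} : Set S.State).toFinite.toFinset.toList.map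
          (fun u => HML.var u))))))))

/-! An assignment `σ` is a post-fixed point of `Δ_Tran` exactly when the relation
`{(s, x) | s ∈ σ x}` is a modal refinement from the LTS to `S`: both conditions say that every
related pair `(s, x)` admits some `M ∈ Tran x` whose transitions and those of `s` simulate each
other up to the relation. Since `⟦Δ_Tran⟧` is the union of all post-fixed points, the initial
conditions on the two sides coincide as well. -/

namespace HML

variable {A X ι : Type} (I : LTS A) (σ : X → Set I.State) (f : ι → HML A X) (s : I.State)

theorem mem_sem_bigOr_map (l : List ι) :
    s ∈ sem I σ (bigOr (l.map f)) ↔ ∃ i ∈ l, s ∈ sem I σ (f i) := by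
  induction l with
  | nil => simp [bigOr, sem]
  | cons i l ih => simp_all [bigOr, sem]

theorem mem_sem_bigAnd_map (l : List ι) :
    s ∈ sem I σ (bigAnd (l.map f)) ↔ ∀ i ∈ l, s ∈ sem I σ (f i) := by
  induction l with
  | nil => simp [bigAnd, sem]
  | cons i l ih => simp_all [bigAnd, sem]

end HML

def LTS.Matches {A X : Type} (I : LTS A) (σ : X → Set I.State) (s : I.State)
    (M : Set (A × X)) : Prop :=
  (∀ p ∈ M, ∃ t ∈ I.trans s p.1, t ∈ σ p.2) ∧
    ∀ a, ∀ t ∈ I.trans s a, ∃ u, (a, u) ∈ M ∧ t ∈ σ u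

theorem LTS.refinement_toNAA_iff {A : Type} (I : LTS A) (S : NAA A)
    (R : Set (I.State × S.State)) :
    NAA.Refinement I.toNAA S R ↔
      ∀ p ∈ R, ∃ M ∈ S.Tran p.2, I.Matches (fun x => {s | (s, x) ∈ R}) p.1 M := by
  refine forall₂_congr fun ⟨s, y⟩ _ => ⟨fun h => ?_, fun h => ?_⟩
  · obtain ⟨M, hM, hsucc_M, hM_succ⟩ := h {q | q.2 ∈ I.trans s q.1} rfl
    refine ⟨M, hM, fun ⟨a, u⟩ hu => ?_, fun a t ht => ?_⟩
    · obtain ⟨⟨_, t⟩, ht, rfl, htu⟩ := hM_succ (a, u) hu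
      exact ⟨t, ht, htu⟩
    · obtain ⟨⟨_, u⟩, hu, rfl, htu⟩ := hsucc_M (a, t) ht
      exact ⟨u, hu, htu⟩
  · rintro _ rfl
    obtain ⟨M, hM, hM_succ, hsucc_M⟩ := h
    refine ⟨M, hM, fun ⟨a, t⟩ ht => ?_, fun ⟨a, u⟩ hu => ?_⟩
    · obtain ⟨u, hu, htu⟩ := hsucc_M a t ht
      exact ⟨(a, u), hu, rfl, htu⟩
    · obtain ⟨t, ht, htu⟩ := hM_succ (a, u) hu
      exact ⟨(a, t), ht, rfl, htu⟩

namespace NAA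

variable {A : Type} [Fintype A] (S : NAA A) [Finite S.State] (I : LTS A)

theorem mem_sem_bh_decl (σ : S.State → Set I.State) (y : S.State) (s : I.State) :
    s ∈ HML.sem I σ (S.bh.decl y) ↔ ∃ M ∈ S.Tran y, I.Matches σ s M := by
  simp [bh, HML.mem_sem_bigOr_map, HML.mem_sem_bigAnd_map, HML.sem, LTS.Matches]

theorem bh_postfixed_iff_refinement (σ : S.State → Set I.State) :
    (∀ y, σ y ⊆ HML.sem I σ (S.bh.decl y)) ↔ Refinement I.toNAA S {p | p.1 ∈ σ p.2} := by
  refine ⟨fun h => (LTS.refinement_toNAA_iff I S _).mpr fun p hp => ?_, fun h y s hs => ?_⟩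
  · exact (mem_sem_bh_decl S I σ p.2 p.1).mp (h p.2 hp)
  · exact (mem_sem_bh_decl S I σ y s).mpr ((LTS.refinement_toNAA_iff I S _).mp h (s, y) hs)

end NAA

/-- a finite NAA `S` has exactly the same LTS implementations as
the models of the νHML formula `bh S`. -/
theorem statement4 (A : Type) [Fintype A] (S : NAA A) [Finite S.State] :
    S.impl = S.bh.models := by
  ext I
  constructor
  · rintro ⟨R, hR, hinit⟩
    obtain ⟨x0, hx0, hR0⟩ := hinit I.init rfl
    exact ⟨x0, hx0, fun x => {s | (s, x) ∈ R}, (S.bh_postfixed_iff_refinement I _).mpr hR, hR0⟩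
  · rintro ⟨x0, hx0, σ, hσ, hσ0⟩
    refine ⟨_, (S.bh_postfixed_iff_refinement I σ).mp hσ, ?_⟩
    rintro s rfl
    exact ⟨x0, hx0, hσ0⟩
end

section
/- For all NAA S₁, S₂, S₃ over Σ: ⟦S₁ ∨ S₂⟧ = ⟦S₁⟧ ∪ ⟦S₂⟧, and moreover S₁ ∨ S₂ ≤ₘ S₃ if and only if S₁ ≤ₘ S₃ and S₂ ≤ₘ S₃, where the disjunction of NAA (S₁, S⁰₁, Tran₁) and (S₂, S⁰₂, Tran₂) (with disjoint state sets) is S₁ ∨ S₂ = (S₁ ∪ S₂, S⁰₁ ∪ S⁰₂, Tran₁ ∪ Tran₂). -/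
/-- Disjunction of two NAA: the componentwise (disjoint) union. -/
def NAA.disj {A : Type} (S1 S2 : NAA A) : NAA A where
  State := S1.State ⊕ S2.State
  init := Sum.inl '' S1.init ∪ Sum.inr '' S2.init
  Tran := fun s => match s with
    | Sum.inl s1 => {M | ∃ M1 ∈ S1.Tran s1,
        M = (fun p : A × S1.State =>
          ((p.1, Sum.inl p.2) : A × (S1.State ⊕ S2.State))) '' M1}
    | Sum.inr s2 => {M | ∃ M2 ∈ S2.Tran s2,
        M = (fun p : A × S2.State =>
          ((p.1, Sum.inr p.2) : A × (S1.State ⊕ S2.State))) '' M2}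

/-! If a map `f` of state spaces carries the admissible transition sets of every state exactly
onto those of its image, both the graph of `f` and its inverse are modal refinements, and the two
injections into `S₁ ∨ S₂` are such maps. Refinements compose and are closed under union, which
gives the least-upper-bound property. An implementation has a single initial state, related to an
initial state on one side of the disjunction; composing with the inverse graph of that injection
yields a refinement of that side. -/

namespace NAA

open SetRel

variable {A : Type} {S T U : NAA A}

theorem Refinement.comp {R : SetRel S.State T.State} {R' : SetRel T.State U.State}
    (hR : S.Refinement T R) (hR' : T.Refinement U R') : S.Refinement U (R ○ R') := by
  rintro ⟨s, u⟩ ⟨t, hst, htu⟩ M₁ hM₁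
  obtain ⟨M₂, hM₂, fw, bw⟩ := hR (s, t) hst M₁ hM₁
  obtain ⟨M₃, hM₃, fw', bw'⟩ := hR' (t, u) htu M₂ hM₂
  refine ⟨M₃, hM₃, fun q hq => ?_, fun r hr => ?_⟩
  · obtain ⟨q', hq', hq₁, hqq'⟩ := fw q hq
    obtain ⟨r, hr, hq'₁, hq'r⟩ := fw' q' hq'
    exact ⟨r, hr, hq₁.trans hq'₁, q'.2, hqq', hq'r⟩
  · obtain ⟨q', hq', hq'₁, hq'r⟩ := bw' r hr
    obtain ⟨q, hq, hq₁, hqq'⟩ := bw q' hq'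
    exact ⟨q, hq, hq₁.trans hq'₁, q'.2, hqq', hq'r⟩

theorem Refinement.union {R₁ R₂ : SetRel S.State T.State}
    (hR₁ : S.Refinement T R₁) (hR₂ : S.Refinement T R₂) : S.Refinement T (R₁ ∪ R₂) := by
  rintro p (hp | hp) M₁ hM₁
  · obtain ⟨M₂, hM₂, fw, bw⟩ := hR₁ p hp M₁ hM₁
    exact ⟨M₂, hM₂, fun q hq => (fw q hq).imp fun _ h => ⟨h.1, h.2.1, Or.inl h.2.2⟩,
      fun r hr => (bw r hr).imp fun _ h => ⟨h.1, h.2.1, Or.inl h.2.2⟩⟩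
  · obtain ⟨M₂, hM₂, fw, bw⟩ := hR₂ p hp M₁ hM₁
    exact ⟨M₂, hM₂, fun q hq => (fw q hq).imp fun _ h => ⟨h.1, h.2.1, Or.inr h.2.2⟩,
      fun r hr => (bw r hr).imp fun _ h => ⟨h.1, h.2.1, Or.inr h.2.2⟩⟩

theorem Refines.trans (h : S.Refines T) (h' : T.Refines U) : S.Refines U := by
  obtain ⟨R, hR, hinit⟩ := h
  obtain ⟨R', hR', hinit'⟩ := h'
  refine ⟨R ○ R', hR.comp hR', fun s hs => ?_⟩
  obtain ⟨t, ht, hst⟩ := hinit s hs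
  obtain ⟨u, hu, htu⟩ := hinit' t ht
  exact ⟨u, hu, t, hst, htu⟩

def IsTranMap (S T : NAA A) (f : S.State → T.State) : Prop :=
  ∀ s, T.Tran (f s) = Set.image (Prod.map id f) '' S.Tran s

namespace IsTranMap

variable {f : S.State → T.State}

theorem refinement_graph (hf : IsTranMap S T f) : S.Refinement T f.graph := by
  rintro ⟨s, _⟩ rfl M₁ hM₁
  refine ⟨Prod.map id f '' M₁, hf s ▸ ⟨M₁, hM₁, rfl⟩,
    fun q hq => ⟨_, ⟨q, hq, rfl⟩, rfl, rfl⟩, ?_⟩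
  rintro _ ⟨q, hq, rfl⟩
  exact ⟨q, hq, rfl, rfl⟩

theorem refinement_graph_inv (hf : IsTranMap S T f) : T.Refinement S f.graph.inv := by
  rintro ⟨t, s⟩ (rfl : f s = t) M hM
  rw [hf s] at hM
  obtain ⟨M₁, hM₁, rfl⟩ := hM
  refine ⟨M₁, hM₁, ?_, fun r hr => ⟨_, ⟨r, hr, rfl⟩, rfl, rfl⟩⟩
  rintro _ ⟨q, hq, rfl⟩
  exact ⟨q, hq, rfl, rfl⟩

theorem refines (hf : IsTranMap S T f) (hinit : Set.MapsTo f S.init T.init) : S.Refines T :=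
  ⟨f.graph, hf.refinement_graph, fun s hs => ⟨f s, hinit hs, rfl⟩⟩

theorem refines_of_refinement (hf : IsTranMap S T f) {R : SetRel U.State T.State}
    (hR : U.Refinement T R) (hinit : ∀ u ∈ U.init, ∃ s ∈ S.init, (u, f s) ∈ R) :
    U.Refines S := by
  refine ⟨R ○ f.graph.inv, hR.comp hf.refinement_graph_inv, fun u hu => ?_⟩
  obtain ⟨s, hs, hus⟩ := hinit u hu
  exact ⟨s, hs, f s, hus, rfl⟩

end IsTranMap

variable {S₁ S₂ S₃ : NAA A}

theorem isTranMap_disj_inl : IsTranMap S₁ (S₁.disj S₂) Sum.inl := fun _ =>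
  Set.ext fun _ => ⟨fun ⟨M, hM, e⟩ => ⟨M, hM, e.symm⟩, fun ⟨M, hM, e⟩ => ⟨M, hM, e.symm⟩⟩

theorem isTranMap_disj_inr : IsTranMap S₂ (S₁.disj S₂) Sum.inr := fun _ =>
  Set.ext fun _ => ⟨fun ⟨M, hM, e⟩ => ⟨M, hM, e.symm⟩, fun ⟨M, hM, e⟩ => ⟨M, hM, e.symm⟩⟩

theorem refines_disj_left : S₁.Refines (S₁.disj S₂) :=
  isTranMap_disj_inl.refines fun s hs => Or.inl ⟨s, hs, rfl⟩

theorem refines_disj_right : S₂.Refines (S₁.disj S₂) :=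
  isTranMap_disj_inr.refines fun s hs => Or.inr ⟨s, hs, rfl⟩

theorem disj_refines_iff : (S₁.disj S₂).Refines S₃ ↔ S₁.Refines S₃ ∧ S₂.Refines S₃ := by
  refine ⟨fun h => ⟨refines_disj_left.trans h, refines_disj_right.trans h⟩, ?_⟩
  rintro ⟨⟨R₁, hR₁, hinit₁⟩, ⟨R₂, hR₂, hinit₂⟩⟩
  refine ⟨(Sum.inl.graph.inv ○ R₁) ∪ (Sum.inr.graph.inv ○ R₂),
    (isTranMap_disj_inl.refinement_graph_inv.comp hR₁).union
      (isTranMap_disj_inr.refinement_graph_inv.comp hR₂), ?_⟩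
  rintro _ (⟨s, hs, rfl⟩ | ⟨s, hs, rfl⟩)
  · obtain ⟨t, ht, hst⟩ := hinit₁ s hs
    exact ⟨t, ht, Or.inl ⟨s, rfl, hst⟩⟩
  · obtain ⟨t, ht, hst⟩ := hinit₂ s hs
    exact ⟨t, ht, Or.inr ⟨s, rfl, hst⟩⟩

theorem refines_disj_iff_of_init_eq_singleton {u : U.State} (hU : U.init = {u}) :
    U.Refines (S₁.disj S₂) ↔ U.Refines S₁ ∨ U.Refines S₂ := by
  refine ⟨fun ⟨R, hR, hinit⟩ => ?_, fun h => h.elim (·.trans refines_disj_left)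
    (·.trans refines_disj_right)⟩
  obtain ⟨_, ⟨s, hs, rfl⟩ | ⟨s, hs, rfl⟩, hus⟩ := hinit u (hU ▸ rfl)
  · refine .inl <| isTranMap_disj_inl.refines_of_refinement hR fun v hv => ?_
    obtain rfl : v = u := by rwa [hU] at hv
    exact ⟨s, hs, hus⟩
  · refine .inr <| isTranMap_disj_inr.refines_of_refinement hR fun v hv => ?_
    obtain rfl : v = u := by rwa [hU] at hv
    exact ⟨s, hs, hus⟩

theorem impl_disj (S₁ S₂ : NAA A) : (S₁.disj S₂).impl = S₁.impl ∪ S₂.impl :=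
  Set.ext fun I => refines_disj_iff_of_init_eq_singleton (U := I.toNAA) rfl

end NAA

theorem statement7_general (A : Type) (S1 S2 S3 : NAA A) :
    (S1.disj S2).impl = S1.impl ∪ S2.impl ∧
    ((S1.disj S2).Refines S3 ↔ S1.Refines S3 ∧ S2.Refines S3) :=
  ⟨NAA.impl_disj S1 S2, NAA.disj_refines_iff⟩

/-- the implementations of a disjunction of NAA are the union of
the implementations, and disjunction is the least upper bound with respect to
modal refinement. -/
theorem statement7 (A : Type) [Fintype A] (S1 S2 S3 : NAA A)
    (h1 : S1.Wellformed) (h2 : S2.Wellformed) (h3 : S3.Wellformed) :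
    (S1.disj S2).impl = S1.impl ∪ S2.impl ∧
    ((S1.disj S2).Refines S3 ↔ S1.Refines S3 ∧ S2.Refines S3) :=
  statement7_general A S1 S2 S3
end

section
/- For all DMTS S₁ and S₂, the translation to NAA commutes with conjunction up to syntactic equality: db(S₁ ∧ S₂) = db(S₁) ∧ db(S₂), i.e. both NAA have the same state set S₁ × S₂, the same initial states S⁰₁ × S⁰₂, and identical transition-constraint functions. -/
/-- Conjunction of two DMTS: may-transitions are synchronised, and every
must-set of either component induces a must-set of synchronised pairs. -/
def DMTS.conj {A : Type} (S1 S2 : DMTS A) : DMTS A where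
  State := S1.State × S2.State
  init := S1.init ×ˢ S2.init
  may := fun s a => (S1.may s.1 a) ×ˢ (S2.may s.2 a)
  must := fun s => {N |
    (∃ N1 ∈ S1.must s.1, N = {q : A × (S1.State × S2.State) |
      (q.1, q.2.1) ∈ N1 ∧ q.2.1 ∈ S1.may s.1 q.1 ∧ q.2.2 ∈ S2.may s.2 q.1}) ∨
    (∃ N2 ∈ S2.must s.2, N = {q : A × (S1.State × S2.State) |
      (q.1, q.2.2) ∈ N2 ∧ q.2.1 ∈ S1.may s.1 q.1 ∧ q.2.2 ∈ S2.may s.2 q.1})}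

/-- Projection of a set of triples `(a, s1, s2)` to the pairs `(a, s1)`. -/
def NAA.pi1 {A S1 S2 : Type} (M : Set (A × (S1 × S2))) : Set (A × S1) :=
  {q | ∃ s2, (q.1, (q.2, s2)) ∈ M}

/-- Projection of a set of triples `(a, s1, s2)` to the pairs `(a, s2)`. -/
def NAA.pi2 {A S1 S2 : Type} (M : Set (A × (S1 × S2))) : Set (A × S2) :=
  {q | ∃ s1, (q.1, (s1, q.2)) ∈ M}

/-- Conjunction of two NAA: the admissible transition sets over the product of
the state spaces are those whose two projections are admissible. -/
def NAA.conj {A : Type} (S1 S2 : NAA A) : NAA A where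
  State := S1.State × S2.State
  init := S1.init ×ˢ S2.init
  Tran := fun s => {M | M.Finite ∧ NAA.pi1 M ∈ S1.Tran s.1 ∧ NAA.pi2 M ∈ S2.Tran s.2}

/-!
Write `M` for a finite set of transitions `(a, (t₁, t₂))` of the conjunction. Every element of `M`
is a synchronised may-transition iff every element of `π₁ M` is a may-transition of `S1` and every
element of `π₂ M` one of `S2`. Granted this, `M` meets the must-set induced by `N₁` iff `π₁ M`
meets `N₁`, because the may-conditions built into the induced must-set hold on all of `M`;
symmetrically for `N₂`. Finiteness of the projections is inherited from `M`.
-/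

namespace NAA

variable {A S1 S2 : Type}

theorem pi1_eq_image (M : Set (A × (S1 × S2))) : pi1 M = (fun q => (q.1, q.2.1)) '' M := by
  ext ⟨a, t1⟩
  simp [pi1]

theorem pi2_eq_image (M : Set (A × (S1 × S2))) : pi2 M = (fun q => (q.1, q.2.2)) '' M := by
  ext ⟨a, t2⟩
  simp [pi2]

theorem finite_pi1 {M : Set (A × (S1 × S2))} (hM : M.Finite) : (pi1 M).Finite := by
  rw [pi1_eq_image]
  exact hM.image _

theorem finite_pi2 {M : Set (A × (S1 × S2))} (hM : M.Finite) : (pi2 M).Finite := by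
  rw [pi2_eq_image]
  exact hM.image _

theorem forall_mem_pi1 {M : Set (A × (S1 × S2))} {P : A × S1 → Prop} :
    (∀ p ∈ pi1 M, P p) ↔ ∀ q ∈ M, P (q.1, q.2.1) := by
  rw [pi1_eq_image, Set.forall_mem_image]

theorem forall_mem_pi2 {M : Set (A × (S1 × S2))} {P : A × S2 → Prop} :
    (∀ p ∈ pi2 M, P p) ↔ ∀ q ∈ M, P (q.1, q.2.2) := by
  rw [pi2_eq_image, Set.forall_mem_image]

theorem pi1_inter_nonempty_iff {M : Set (A × (S1 × S2))} {N : Set (A × S1)} :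
    (pi1 M ∩ N).Nonempty ↔ ∃ q ∈ M, (q.1, q.2.1) ∈ N := by
  rw [pi1_eq_image, Set.image_inter_nonempty_iff]
  rfl

theorem pi2_inter_nonempty_iff {M : Set (A × (S1 × S2))} {N : Set (A × S2)} :
    (pi2 M ∩ N).Nonempty ↔ ∃ q ∈ M, (q.1, q.2.2) ∈ N := by
  rw [pi2_eq_image, Set.image_inter_nonempty_iff]
  rfl

end NAA

namespace DMTS

variable {A : Type} (S1 S2 : DMTS A)

theorem forall_mem_may_conj_iff (s : S1.State × S2.State) (M : Set (A × (S1.State × S2.State))) :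
    (∀ q ∈ M, q.2 ∈ (S1.conj S2).may s q.1) ↔
      (∀ p ∈ NAA.pi1 M, p.2 ∈ S1.may s.1 p.1) ∧ (∀ p ∈ NAA.pi2 M, p.2 ∈ S2.may s.2 p.1) := by
  rw [NAA.forall_mem_pi1, NAA.forall_mem_pi2, ← forall₂_and]
  rfl

theorem forall_conj_must_inter_nonempty_iff (s : S1.State × S2.State)
    {M : Set (A × (S1.State × S2.State))} (hM : ∀ q ∈ M, q.2 ∈ (S1.conj S2).may s q.1) :
    (∀ N ∈ (S1.conj S2).must s, (M ∩ N).Nonempty) ↔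
      (∀ N1 ∈ S1.must s.1, (NAA.pi1 M ∩ N1).Nonempty) ∧
        (∀ N2 ∈ S2.must s.2, (NAA.pi2 M ∩ N2).Nonempty) := by
  simp only [NAA.pi1_inter_nonempty_iff, NAA.pi2_inter_nonempty_iff]
  constructor
  · intro h
    constructor
    · intro N1 hN1
      obtain ⟨q, hqM, hqN⟩ := h _ (Or.inl ⟨N1, hN1, rfl⟩)
      exact ⟨q, hqM, hqN.1⟩
    · intro N2 hN2
      obtain ⟨q, hqM, hqN⟩ := h _ (Or.inr ⟨N2, hN2, rfl⟩)
      exact ⟨q, hqM, hqN.1⟩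
  · rintro ⟨h1, h2⟩ N (⟨N1, hN1, rfl⟩ | ⟨N2, hN2, rfl⟩)
    · obtain ⟨q, hqM, hqN⟩ := h1 N1 hN1
      exact ⟨q, hqM, hqN, hM q hqM⟩
    · obtain ⟨q, hqM, hqN⟩ := h2 N2 hN2
      exact ⟨q, hqM, hqN, hM q hqM⟩

theorem mem_db_conj_tran_iff (s : S1.State × S2.State) (M : Set (A × (S1.State × S2.State))) :
    M ∈ (S1.conj S2).db.Tran s ↔ M ∈ (S1.db.conj S2.db).Tran s := by
  constructor
  · rintro ⟨hfin, hmay, hmust⟩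
    obtain ⟨may1, may2⟩ := (forall_mem_may_conj_iff S1 S2 s M).1 hmay
    obtain ⟨must1, must2⟩ := (forall_conj_must_inter_nonempty_iff S1 S2 s hmay).1 hmust
    exact ⟨hfin, ⟨NAA.finite_pi1 hfin, may1, must1⟩, NAA.finite_pi2 hfin, may2, must2⟩
  · rintro ⟨hfin, ⟨-, may1, must1⟩, -, may2, must2⟩
    have hmay := (forall_mem_may_conj_iff S1 S2 s M).2 ⟨may1, may2⟩
    exact ⟨hfin, hmay, (forall_conj_must_inter_nonempty_iff S1 S2 s hmay).2 ⟨must1, must2⟩⟩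

end DMTS

theorem statement10_general (A : Type) (S1 S2 : DMTS A) :
    (S1.conj S2).db = (S1.db).conj (S2.db) := by
  show NAA.mk _ _ _ = NAA.mk _ _ _
  congr 1
  funext s
  ext M
  exact DMTS.mem_db_conj_tran_iff S1 S2 s M

/-- the translation from DMTS to NAA commutes with conjunction up
to syntactic equality: `db (S1 ∧ S2) = db S1 ∧ db S2` (same state set, same
initial states, identical transition-constraint functions). -/
theorem statement10 (A : Type) [Fintype A] (S1 S2 : DMTS A)
    (h1 : S1.Wellformed) (h2 : S2.Wellformed) :
    (S1.conj S2).db = (S1.db).conj (S2.db) :=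
  statement10_general A S1 S2
end

section
/- For all DMTS S₁, S₂, S₃ over Σ: ⟦S₁ ∧ S₂⟧ = ⟦S₁⟧ ∩ ⟦S₂⟧, and moreover S₁ ≤ₘ S₂ ∧ S₃ if and only if S₁ ≤ₘ S₂ and S₁ ≤ₘ S₃, where ∧ is the DMTS conjunction. -/
/-!
Modal refinement is transitive and both projections `S₂ ∧ S₃ ≤ₘ Sᵢ` are refinements, so
any refinement of the conjunction refines each conjunct. Conversely, refinements
`R₂ : S₁ ≤ₘ S₂` and `R₃ : S₁ ≤ₘ S₃` pair up to `{(s, (u, v)) | (s, u) ∈ R₂, (s, v) ∈ R₃}`;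
every element of a must-set of `S₁` chosen to answer `Sᵢ` is a may-transition of `S₁`,
which the other refinement can follow, so it is matched by a transition of the conjunction.
LTS satisfy this must-within-may condition too, so the description of the implementations
is the special case `S₁ = I`.
-/

namespace DMTS

variable {A : Type}

def MustSubsetMay (S : DMTS A) : Prop :=
  ∀ s, ∀ N ∈ S.must s, ∀ p ∈ N, p.2 ∈ S.may s p.1

theorem Wellformed.mustSubsetMay {S : DMTS A} (h : S.Wellformed) : S.MustSubsetMay :=
  h.2.2

theorem _root_.LTS.toDMTS_mustSubsetMay (I : LTS A) : I.toDMTS.MustSubsetMay := by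
  rintro s N ⟨a, t, ht, rfl⟩ p rfl
  exact ht

open SetRel in
theorem Refinement.comp {S1 S2 S3 : DMTS A} {R : Set (S1.State × S2.State)}
    {R' : Set (S2.State × S3.State)} (hR : Refinement S1 S2 R) (hR' : Refinement S2 S3 R') :
    Refinement S1 S3 (R ○ R') := by
  rintro ⟨s, w⟩ ⟨u, hsu, huw⟩
  obtain ⟨hmay, hmust⟩ := hR _ hsu
  obtain ⟨hmay', hmust'⟩ := hR' _ huw
  constructor
  · intro a t1 ht1
    obtain ⟨t2, ht2, h12⟩ := hmay a t1 ht1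
    obtain ⟨t3, ht3, h23⟩ := hmay' a t2 ht2
    exact ⟨t3, ht3, t2, h12, h23⟩
  · intro N3 hN3
    obtain ⟨N2, hN2, hN23⟩ := hmust' N3 hN3
    obtain ⟨N1, hN1, hN12⟩ := hmust N2 hN2
    refine ⟨N1, hN1, fun q hq => ?_⟩
    obtain ⟨t2, hq2, h12⟩ := hN12 q hq
    obtain ⟨t3, hq3, h23⟩ := hN23 (q.1, t2) hq2
    exact ⟨t3, hq3, t2, h12, h23⟩

theorem Refines.trans {S1 S2 S3 : DMTS A} (h12 : Refines S1 S2) (h23 : Refines S2 S3) :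
    Refines S1 S3 := by
  obtain ⟨R, hR, hinit⟩ := h12
  obtain ⟨R', hR', hinit'⟩ := h23
  refine ⟨_, hR.comp hR', fun s hs => ?_⟩
  obtain ⟨u, hu, hsu⟩ := hinit s hs
  obtain ⟨w, hw, huw⟩ := hinit' u hu
  exact ⟨w, hw, u, hsu, huw⟩

theorem conj_refines_left (S1 S2 : DMTS A) : Refines (S1.conj S2) S1 := by
  refine ⟨{p | p.1.1 = p.2}, ?_, fun s hs => ⟨s.1, hs.1, rfl⟩⟩
  rintro ⟨⟨u, v⟩, _⟩ (rfl : u = _)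
  constructor
  · rintro a ⟨t1, t2⟩ ⟨ht1, -⟩
    exact ⟨t1, ht1, rfl⟩
  · intro N1 hN1
    exact ⟨_, Or.inl ⟨N1, hN1, rfl⟩, fun q hq => ⟨q.2.1, hq.1, rfl⟩⟩

theorem conj_refines_right (S1 S2 : DMTS A) : Refines (S1.conj S2) S2 := by
  refine ⟨{p | p.1.2 = p.2}, ?_, fun s hs => ⟨s.2, hs.2, rfl⟩⟩
  rintro ⟨⟨u, v⟩, _⟩ (rfl : v = _)
  constructor
  · rintro a ⟨t1, t2⟩ ⟨-, ht2⟩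
    exact ⟨t2, ht2, rfl⟩
  · intro N2 hN2
    exact ⟨_, Or.inr ⟨N2, hN2, rfl⟩, fun q hq => ⟨q.2.2, hq.1, rfl⟩⟩

theorem refines_conj {S1 S2 S3 : DMTS A} (h1 : S1.MustSubsetMay) (h2 : S2.MustSubsetMay)
    (h3 : S3.MustSubsetMay) (h12 : Refines S1 S2) (h13 : Refines S1 S3) :
    Refines S1 (S2.conj S3) := by
  obtain ⟨R2, hR2, hi2⟩ := h12
  obtain ⟨R3, hR3, hi3⟩ := h13
  refine ⟨{p | (p.1, p.2.1) ∈ R2 ∧ (p.1, p.2.2) ∈ R3}, ?_, fun s hs => ?_⟩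
  · rintro ⟨s, u, v⟩ ⟨hsu, hsv⟩
    obtain ⟨hmay2, hmust2⟩ := hR2 _ hsu
    obtain ⟨hmay3, hmust3⟩ := hR3 _ hsv
    constructor
    · intro a t1 ht1
      obtain ⟨t2, ht2, hr2⟩ := hmay2 a t1 ht1
      obtain ⟨t3, ht3, hr3⟩ := hmay3 a t1 ht1
      exact ⟨(t2, t3), ⟨ht2, ht3⟩, hr2, hr3⟩
    · rintro N (⟨N2, hN2, rfl⟩ | ⟨N3, hN3, rfl⟩)
      · obtain ⟨N1, hN1, hmatch⟩ := hmust2 N2 hN2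
        refine ⟨N1, hN1, fun q hq => ?_⟩
        obtain ⟨t2, ht2N, hr2⟩ := hmatch q hq
        obtain ⟨t3, ht3, hr3⟩ := hmay3 q.1 q.2 (h1 s N1 hN1 q hq)
        exact ⟨(t2, t3), ⟨ht2N, h2 u N2 hN2 _ ht2N, ht3⟩, hr2, hr3⟩
      · obtain ⟨N1, hN1, hmatch⟩ := hmust3 N3 hN3
        refine ⟨N1, hN1, fun q hq => ?_⟩
        obtain ⟨t3, ht3N, hr3⟩ := hmatch q hq
        obtain ⟨t2, ht2, hr2⟩ := hmay2 q.1 q.2 (h1 s N1 hN1 q hq)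
        exact ⟨(t2, t3), ⟨ht3N, ht2, h3 v N3 hN3 _ ht3N⟩, hr2, hr3⟩
  · obtain ⟨u, hu, hsu⟩ := hi2 s hs
    obtain ⟨v, hv, hsv⟩ := hi3 s hs
    exact ⟨(u, v), ⟨hu, hv⟩, hsu, hsv⟩

theorem refines_conj_iff {S1 S2 S3 : DMTS A} (h1 : S1.MustSubsetMay) (h2 : S2.MustSubsetMay)
    (h3 : S3.MustSubsetMay) :
    Refines S1 (S2.conj S3) ↔ Refines S1 S2 ∧ Refines S1 S3 :=
  ⟨fun h => ⟨h.trans (conj_refines_left S2 S3), h.trans (conj_refines_right S2 S3)⟩,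
    fun h => refines_conj h1 h2 h3 h.1 h.2⟩

theorem impl_conj {S1 S2 : DMTS A} (h1 : S1.MustSubsetMay) (h2 : S2.MustSubsetMay) :
    (S1.conj S2).impl = S1.impl ∩ S2.impl := by
  ext I
  exact refines_conj_iff I.toDMTS_mustSubsetMay h1 h2

end DMTS

theorem statement12_general (A : Type) (S1 S2 S3 : DMTS A)
    (h1 : S1.Wellformed) (h2 : S2.Wellformed) (h3 : S3.Wellformed) :
    (S1.conj S2).impl = S1.impl ∩ S2.impl ∧
    (S1.Refines (S2.conj S3) ↔ S1.Refines S2 ∧ S1.Refines S3) :=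
  ⟨DMTS.impl_conj h1.mustSubsetMay h2.mustSubsetMay,
    DMTS.refines_conj_iff h1.mustSubsetMay h2.mustSubsetMay h3.mustSubsetMay⟩

/-- the implementations of a conjunction of DMTS are the
intersection of the implementations, and conjunction is the greatest lower
bound with respect to modal refinement. -/
theorem statement12 (A : Type) [Fintype A] (S1 S2 S3 : DMTS A)
    (h1 : S1.Wellformed) (h2 : S2.Wellformed) (h3 : S3.Wellformed) :
    (S1.conj S2).impl = S1.impl ∩ S2.impl ∧
    (S1.Refines (S2.conj S3) ↔ S1.Refines S2 ∧ S1.Refines S3) :=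
  statement12_general A S1 S2 S3 h1 h2 h3
end

section
/- Up to modal-refinement equivalence ≡ₘ, the structural composition ‖ on NAA is associative and commutative, distributes over disjunction (S₁ ‖ (S₂ ∨ S₃) ≡ₘ (S₁ ‖ S₂) ∨ (S₁ ‖ S₃)), and has as unit the LTS U = ({u}, {u}, TranU) with TranU(u) = { Σ × {u} } (i.e. u has a must a-loop for every a ∈ Σ): S ‖ U ≡ₘ S for every NAA S. -/
/-- Structural (CSP-style) composition of two NAA:
`Tran (s1, s2) = { M1 ‖ M2 | M1 ∈ Tran1 s1, M2 ∈ Tran2 s2 }`, where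
`M1 ‖ M2 = {(a, (t1, t2)) | (a, t1) ∈ M1, (a, t2) ∈ M2}`. -/
def NAA.comp {A : Type} (S1 S2 : NAA A) : NAA A where
  State := S1.State × S2.State
  init := S1.init ×ˢ S2.init
  Tran := fun s => {M | ∃ M1 ∈ S1.Tran s.1, ∃ M2 ∈ S2.Tran s.2,
    M = {q : A × (S1.State × S2.State) | (q.1, q.2.1) ∈ M1 ∧ (q.1, q.2.2) ∈ M2}}

/-- The unit `U` for structural composition: a single state with a must
`a`-loop for every `a ∈ Σ`, i.e. `Tran u = { Σ × {u} }`. -/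
def NAA.unit (A : Type) : NAA A where
  State := Unit
  init := {Unit.unit}
  Tran := fun _ => {M | M = Set.univ}

/-!
Each law is witnessed by a canonical map of state spaces: reassociation, the swap, the
distribution of `×` over `⊕`, and the projection forgetting the unit state. Such a map sends
the initial states onto the initial states and the transition sets `M₁ ‖ M₂` of each state
exactly onto those of its image, so its graph is a modal refinement one way and its converse
one the other way.
-/

namespace NAA

variable {A : Type}

lemma mem_image_map_iff {α β : Type} (f : α → β) {M : Set (A × α)} {r : A × β} :
    r ∈ Prod.map id f '' M ↔ ∃ q ∈ M, q.1 = r.1 ∧ f q.2 = r.2 := by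
  simp only [Set.mem_image, Prod.ext_iff, Prod.map_fst, Prod.map_snd, id]

section Map

variable {S T : NAA A} (f : S.State → T.State)

lemma refines_of_map (hinit : ∀ s ∈ S.init, f s ∈ T.init)
    (htran : ∀ s, ∀ M ∈ S.Tran s, Prod.map id f '' M ∈ T.Tran (f s)) :
    Refines S T := by
  refine ⟨{p | f p.1 = p.2}, ?_, fun s hs => ⟨f s, hinit s hs, rfl⟩⟩
  rintro ⟨s, _⟩ (rfl : f s = _) M hM
  exact ⟨_, htran s M hM, fun q hq => ⟨_, Set.mem_image_of_mem _ hq, rfl, rfl⟩,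
    fun r hr => (mem_image_map_iff f).1 hr⟩

lemma refines_of_map_converse (hinit : T.init ⊆ f '' S.init)
    (htran : ∀ s, ∀ M ∈ T.Tran (f s), ∃ M' ∈ S.Tran s, Prod.map id f '' M' = M) :
    Refines T S := by
  refine ⟨{p | p.1 = f p.2}, ?_, fun t ht => ?_⟩
  · rintro ⟨_, s⟩ (rfl : _ = f s) _ hfM
    obtain ⟨M, hM, rfl⟩ := htran s _ hfM
    refine ⟨M, hM, fun r hr => ?_, fun q hq => ⟨_, Set.mem_image_of_mem _ hq, rfl, rfl⟩⟩
    obtain ⟨q, hq, h1, h2⟩ := (mem_image_map_iff f).1 hr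
    exact ⟨q, hq, h1.symm, h2.symm⟩
  · obtain ⟨s, hs, rfl⟩ := hinit ht
    exact ⟨s, hs, rfl⟩

lemma equiv_of_map (hinit : f '' S.init = T.init)
    (hfwd : ∀ s, ∀ M ∈ S.Tran s, Prod.map id f '' M ∈ T.Tran (f s))
    (hbwd : ∀ s, ∀ M ∈ T.Tran (f s), ∃ M' ∈ S.Tran s, Prod.map id f '' M' = M) :
    Equiv S T :=
  ⟨refines_of_map f (fun _ hs => hinit ▸ Set.mem_image_of_mem f hs) hfwd,
    refines_of_map_converse f hinit.ge hbwd⟩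

end Map

-- `M1 ‖ M2`, as in `NAA.comp`
def par {α β : Type} (M1 : Set (A × α)) (M2 : Set (A × β)) : Set (A × (α × β)) :=
  {q | (q.1, q.2.1) ∈ M1 ∧ (q.1, q.2.2) ∈ M2}

section Relabel

variable {α β γ : Type}

lemma image_prodAssoc_prod (I1 : Set α) (I2 : Set β) (I3 : Set γ) :
    Equiv.prodAssoc α β γ '' ((I1 ×ˢ I2) ×ˢ I3) = I1 ×ˢ (I2 ×ˢ I3) := by
  ext ⟨t1, t2, t3⟩
  simp [and_assoc]

lemma image_prodSumDistrib_prod (I1 : Set α) (I2 : Set β) (I3 : Set γ) :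
    Equiv.prodSumDistrib α β γ '' (I1 ×ˢ (Sum.inl '' I2 ∪ Sum.inr '' I3)) =
      Sum.inl '' (I1 ×ˢ I2) ∪ Sum.inr '' (I1 ×ˢ I3) := by
  ext (⟨t1, t2⟩ | ⟨t1, t3⟩) <;> simp

lemma image_prodAssoc_par (M1 : Set (A × α)) (M2 : Set (A × β)) (M3 : Set (A × γ)) :
    Prod.map id (Equiv.prodAssoc α β γ) '' par (par M1 M2) M3 = par M1 (par M2 M3) := by
  ext ⟨a, t1, t2, t3⟩
  simp [par, and_assoc]

lemma image_swap_par (M1 : Set (A × α)) (M2 : Set (A × β)) :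
    Prod.map id Prod.swap '' par M1 M2 = par M2 M1 := by
  ext ⟨a, t2, t1⟩
  simp [par, and_comm]

lemma image_fst_par_univ (M : Set (A × α)) :
    Prod.map id Prod.fst '' par M (Set.univ : Set (A × Unit)) = M := by
  ext ⟨a, t⟩
  simp [par]

lemma image_prodSumDistrib_par_inl (M1 : Set (A × α)) (M2 : Set (A × β)) :
    Prod.map id (Equiv.prodSumDistrib α β γ) '' par M1 (Prod.map id Sum.inl '' M2) =
      Prod.map id Sum.inl '' par M1 M2 := by
  ext ⟨a, t⟩
  simp [par]

lemma image_prodSumDistrib_par_inr (M1 : Set (A × α)) (M3 : Set (A × γ)) :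
    Prod.map id (Equiv.prodSumDistrib α β γ) '' par M1 (Prod.map id Sum.inr '' M3) =
      Prod.map id Sum.inr '' par M1 M3 := by
  ext ⟨a, t⟩
  simp [par]

end Relabel

theorem comp_assoc (S1 S2 S3 : NAA A) :
    Equiv ((S1.comp S2).comp S3) (S1.comp (S2.comp S3)) := by
  refine equiv_of_map (Equiv.prodAssoc _ _ _) (image_prodAssoc_prod _ _ _) ?_ ?_
  · rintro s _ ⟨_, ⟨M1, hM1, M2, hM2, rfl⟩, M3, hM3, rfl⟩
    exact ⟨M1, hM1, par M2 M3, ⟨M2, hM2, M3, hM3, rfl⟩, image_prodAssoc_par M1 M2 M3⟩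
  · rintro s _ ⟨M1, hM1, _, ⟨M2, hM2, M3, hM3, rfl⟩, rfl⟩
    exact ⟨par (par M1 M2) M3, ⟨_, ⟨M1, hM1, M2, hM2, rfl⟩, M3, hM3, rfl⟩,
      image_prodAssoc_par M1 M2 M3⟩

theorem comp_comm (S1 S2 : NAA A) : Equiv (S1.comp S2) (S2.comp S1) := by
  refine equiv_of_map Prod.swap (Set.image_swap_prod _ _) ?_ ?_
  · rintro s _ ⟨M1, hM1, M2, hM2, rfl⟩
    exact ⟨M2, hM2, M1, hM1, image_swap_par M1 M2⟩
  · rintro s _ ⟨M2, hM2, M1, hM1, rfl⟩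
    exact ⟨par M1 M2, ⟨M1, hM1, M2, hM2, rfl⟩, image_swap_par M1 M2⟩

theorem comp_disj (S1 S2 S3 : NAA A) :
    Equiv (S1.comp (S2.disj S3)) ((S1.comp S2).disj (S1.comp S3)) := by
  refine equiv_of_map (Equiv.prodSumDistrib _ _ _) (image_prodSumDistrib_prod _ _ _) ?_ ?_
  · rintro ⟨s1, s2 | s3⟩ _ ⟨M1, hM1, _, ⟨M, hM, rfl⟩, rfl⟩
    · exact ⟨par M1 M, ⟨M1, hM1, M, hM, rfl⟩, image_prodSumDistrib_par_inl M1 M⟩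
    · exact ⟨par M1 M, ⟨M1, hM1, M, hM, rfl⟩, image_prodSumDistrib_par_inr M1 M⟩
  · rintro ⟨s1, s2 | s3⟩ _ ⟨_, ⟨M1, hM1, M, hM, rfl⟩, rfl⟩
    · exact ⟨_, ⟨M1, hM1, _, ⟨M, hM, rfl⟩, rfl⟩, image_prodSumDistrib_par_inl M1 M⟩
    · exact ⟨_, ⟨M1, hM1, _, ⟨M, hM, rfl⟩, rfl⟩, image_prodSumDistrib_par_inr M1 M⟩

theorem comp_unit (S : NAA A) : Equiv (S.comp (unit A)) S := by
  refine equiv_of_map Prod.fst (Set.fst_image_prod _ (Set.singleton_nonempty _)) ?_ ?_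
  · rintro s _ ⟨M, hM, _, rfl, rfl⟩
    exact (image_fst_par_univ M).symm ▸ hM
  · intro s M hM
    exact ⟨par M Set.univ, ⟨M, hM, Set.univ, rfl, rfl⟩, image_fst_par_univ M⟩

end NAA

theorem statement14_general (A : Type) (S1 S2 S3 S : NAA A) :
    NAA.Equiv ((S1.comp S2).comp S3) (S1.comp (S2.comp S3)) ∧
    NAA.Equiv (S1.comp S2) (S2.comp S1) ∧
    NAA.Equiv (S1.comp (S2.disj S3)) ((S1.comp S2).disj (S1.comp S3)) ∧
    NAA.Equiv (S.comp (NAA.unit A)) S :=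
  ⟨NAA.comp_assoc S1 S2 S3, NAA.comp_comm S1 S2, NAA.comp_disj S1 S2 S3, NAA.comp_unit S⟩

/-- up to mutual modal refinement, structural composition of NAA
is associative and commutative, distributes over disjunction, and has the LTS
`U` as unit. -/
theorem statement14 (A : Type) [Fintype A] (S1 S2 S3 S : NAA A)
    (h1 : S1.Wellformed) (h2 : S2.Wellformed) (h3 : S3.Wellformed)
    (hS : S.Wellformed) :
    NAA.Equiv ((S1.comp S2).comp S3) (S1.comp (S2.comp S3)) ∧
    NAA.Equiv (S1.comp S2) (S2.comp S1) ∧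
    NAA.Equiv (S1.comp (S2.disj S3)) ((S1.comp S2).disj (S1.comp S3)) ∧
    NAA.Equiv (S.comp (NAA.unit A)) S :=
  statement14_general A S1 S2 S3 S
end

section
/- The MTS quotient is right adjoint to composition: for all MTS S, T and X over Σ, X ≤ₘ S / T if and only if T ‖ X ≤ₘ S, where S / T is the DMTS quotient construction for MTS and ‖ is the composition of MTS (the NAA composition under the standard translation). -/
namespace DMTS

variable {A : Type}

/-- An MTS is a DMTS with a single initial state in which every must-set is a
singleton. -/
def IsMTS (S : DMTS A) : Prop :=
  (∃ s0, S.init = {s0}) ∧ ∀ s, ∀ N ∈ S.must s, ∃ a t, N = {(a, t)}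

/-- Structural composition of MTS (the NAA composition under the standard
translation): may- and must-transitions are synchronised. -/
def mtsComp {A : Type} (T X : DMTS A) : DMTS A where
  State := T.State × X.State
  init := T.init ×ˢ X.init
  may := fun s a => (T.may s.1 a) ×ˢ (X.may s.2 a)
  must := fun s => {N | ∃ a t' x', {(a, t')} ∈ T.must s.1 ∧
    {(a, x')} ∈ X.must s.2 ∧ N = {(a, (t', x'))}}

/-- `α(s)`: the actions enabled (as may-transitions) in `s`. -/
def alphaD (S : DMTS A) (s : S.State) : Set A := {a | ∃ t, t ∈ S.may s a}

/-- `γ(q) = ⋂_{(s,t) ∈ q} (α(s) ∪ (Σ ∖ α(t)))`. -/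
def gammaD (S T : DMTS A) (q : Set (S.State × T.State)) : Set A :=
  {a | ∀ p ∈ q, a ∈ S.alphaD p.1 ∨ a ∉ T.alphaD p.2}

/-- `May_a(q)`: the possible next quotient states after an `a`-transition (for
`a ∈ γ(q)`), each obtained by combining the `a`-may-successors `t'` of the `tᵢ`
with some choice of `a`-may-successors of the `sᵢ`. -/
def mayQ (S T : DMTS A) (a : A) (q : Set (S.State × T.State)) :
    Set (Set (S.State × T.State)) :=
  {r | a ∈ gammaD S T q ∧ r.Finite ∧
    ∃ f : S.State × T.State → T.State → S.State,
    (∀ p ∈ q, ∀ t' ∈ T.may p.2 a, f p t' ∈ S.may p.1 a) ∧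
    r = {x | ∃ p ∈ q, ∃ t' ∈ T.may p.2 a, x = (f p t', t')}}

/-- The quotient `S / T` of two MTS, as a DMTS: states are the finite subsets
`q = {s₁/t₁, …, sₙ/tₙ}` of `S × T`, the single initial state is `{s⁰/t⁰}`, the
empty state is universal (may-loops on all actions, no musts), the
may-transitions under `a` go to the elements of `May_a(q)`, and every must
`sᵢ →ᵃ s'` induces the disjunctive must-transition
`q ⟶ {(a, M) ∈ {a} × May_a(q) | ∃ t' : s'/t' ∈ M, tᵢ →ᵃ t'}`. -/
def mtsQuot (S T : DMTS A) : DMTS A where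
  State := Set (S.State × T.State)
  init := { {p | p.1 ∈ S.init ∧ p.2 ∈ T.init} }
  may := fun q a => {r | (q = ∅ ∧ r = ∅) ∨ (q ≠ ∅ ∧ r ∈ mayQ S T a q)}
  must := fun q => {N | q ≠ ∅ ∧ ∃ p ∈ q, ∃ a s', {(a, s')} ∈ S.must p.1 ∧
    N = {z : A × Set (S.State × T.State) | z.1 = a ∧ z.2 ∈ mayQ S T a q ∧
      ∃ t', (s', t') ∈ z.2 ∧ {(a, t')} ∈ T.must p.2}}

end DMTS

/-!
Both directions are witnessed by explicit refinement relations. From `R : X ≤ₘ S / T`,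
relate `t‖x` to `s` whenever `x R q` for some quotient state `q ∋ s/t`. From
`R : T ‖ X ≤ₘ S`, relate `x` to every finite `q` all of whose pairs `s/t` satisfy `t‖x R s`.

For the second relation, a may-step `x ⤏ᵃ x'` is matched by choosing, for every `sᵢ/tᵢ ∈ q`
and every `tᵢ ⤏ᵃ t'`, an `R`-partner of `t'‖x'` among the `a`-successors of `sᵢ`; such a
choice function is exactly what selects an element of `May_a(q)`. For the disjunctive must
induced by `sᵢ →ᵃ s'`, the refinement `T ‖ X ≤ₘ S` supplies musts `tᵢ →ᵃ t'`, `x →ᵃ x'`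
with `t'‖x' R s'`, and the choice is pinned to `s'` at `(sᵢ/tᵢ, t')`.
-/

theorem exists_choice₂ {α β γ : Type*} [Nonempty γ] {q : Set α} {M : α → Set β}
    {P : α → β → γ → Prop} (h : ∀ p ∈ q, ∀ b ∈ M p, ∃ c, P p b c) :
    ∃ f : α → β → γ, ∀ p ∈ q, ∀ b ∈ M p, P p b (f p b) := by
  have h' : ∀ p b, ∃ c, p ∈ q → b ∈ M p → P p b c := fun p b => by
    by_cases hpb : p ∈ q ∧ b ∈ M p
    · obtain ⟨c, hc⟩ := h p hpb.1 b hpb.2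
      exact ⟨c, fun _ _ => hc⟩
    · exact ⟨Classical.arbitrary γ, fun hp hb => absurd ⟨hp, hb⟩ hpb⟩
  choose f hf using h'
  exact ⟨f, fun p hp b hb => hf p b hp hb⟩

theorem exists_choice₂_eq {α β γ : Type*} {q : Set α} {M : α → Set β}
    {P : α → β → γ → Prop} (h : ∀ p ∈ q, ∀ b ∈ M p, ∃ c, P p b c)
    {p₀ : α} {b₀ : β} {c₀ : γ} (h₀ : P p₀ b₀ c₀) :
    ∃ f : α → β → γ, (∀ p ∈ q, ∀ b ∈ M p, P p b (f p b)) ∧ f p₀ b₀ = c₀ := by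
  classical
  have : Nonempty γ := ⟨c₀⟩
  obtain ⟨f, hf⟩ := exists_choice₂ h
  refine ⟨fun p b => if p = p₀ ∧ b = b₀ then c₀ else f p b, fun p hp b hb => ?_,
    by simp⟩
  by_cases hpb : p = p₀ ∧ b = b₀
  · obtain ⟨rfl, rfl⟩ := hpb
    simpa using h₀
  · simpa [hpb] using hf p hp b hb

namespace DMTS

variable {A : Type} {S T X : DMTS A}

section Quotient

def quotSucc (S T : DMTS A) (a : A) (q : Set (S.State × T.State))
    (f : S.State × T.State → T.State → S.State) : Set (S.State × T.State) :=
  {x | ∃ p ∈ q, ∃ t' ∈ T.may p.2 a, x = (f p t', t')}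

def quotMust (S T : DMTS A) (q : Set (S.State × T.State)) (t : T.State) (a : A)
    (s' : S.State) : Set (A × Set (S.State × T.State)) :=
  {z | z.1 = a ∧ z.2 ∈ mayQ S T a q ∧ ∃ t', (s', t') ∈ z.2 ∧ {(a, t')} ∈ T.must t}

theorem mem_mtsQuot_may {q r : Set (S.State × T.State)} {a : A} :
    r ∈ (S.mtsQuot T).may q a ↔ (q = ∅ ∧ r = ∅) ∨ (q ≠ ∅ ∧ r ∈ mayQ S T a q) :=
  Iff.rfl

theorem mem_mtsQuot_must {q : Set (S.State × T.State)}
    {N : Set (A × Set (S.State × T.State))} :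
    N ∈ (S.mtsQuot T).must q ↔
      q ≠ ∅ ∧ ∃ p ∈ q, ∃ a s', {(a, s')} ∈ S.must p.1 ∧ N = quotMust S T q p.2 a s' :=
  Iff.rfl

variable {a : A} {q : Set (S.State × T.State)} {f : S.State × T.State → T.State → S.State}

theorem mk_mem_quotSucc {p : S.State × T.State} (hp : p ∈ q) {t' : T.State}
    (ht' : t' ∈ T.may p.2 a) : (f p t', t') ∈ quotSucc S T a q f :=
  ⟨p, hp, t', ht', rfl⟩

theorem quotSucc_finite (hT : ∀ t a, (T.may t a).Finite) (hq : q.Finite) :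
    (quotSucc S T a q f).Finite := by
  refine (hq.biUnion fun p _ => (hT p.2 a).image fun t' => (f p t', t')).subset ?_
  rintro _ ⟨p, hp, t', ht', rfl⟩
  exact Set.mem_biUnion hp ⟨t', ht', rfl⟩

theorem mem_gammaD_of_forall_mem_may
    (hf : ∀ p ∈ q, ∀ t' ∈ T.may p.2 a, f p t' ∈ S.may p.1 a) : a ∈ gammaD S T q := by
  intro p hp
  rw [or_iff_not_imp_right, not_not]
  rintro ⟨t', ht'⟩
  exact ⟨_, hf p hp t' ht'⟩

theorem quotSucc_mem_mayQ (hT : ∀ t a, (T.may t a).Finite) (hq : q.Finite)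
    (hf : ∀ p ∈ q, ∀ t' ∈ T.may p.2 a, f p t' ∈ S.may p.1 a) :
    quotSucc S T a q f ∈ mayQ S T a q :=
  ⟨mem_gammaD_of_forall_mem_may hf, quotSucc_finite hT hq, f, hf, rfl⟩

end Quotient

section QuotientToComposition

def compRelOfQuotRel (R : Set (X.State × Set (S.State × T.State))) :
    Set ((T.State × X.State) × S.State) :=
  {p | ∃ q, (p.1.2, q) ∈ R ∧ (p.2, p.1.1) ∈ q}

variable {R : Set (X.State × Set (S.State × T.State))}

theorem refinement_compRelOfQuotRel (hS : ∀ s, ∀ N ∈ S.must s, ∃ a s', N = {(a, s')})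
    (hX : ∀ x, ∀ N ∈ X.must x, ∃ a x', N = {(a, x')})
    (hR : Refinement X (S.mtsQuot T) R) :
    Refinement (T.mtsComp X) S (compRelOfQuotRel R) := by
  rintro ⟨⟨t, x⟩, s⟩ ⟨q, hxq, hstq⟩
  have hq : q ≠ ∅ := Set.nonempty_iff_ne_empty.1 ⟨_, hstq⟩
  constructor
  · rintro a ⟨t', x'⟩ ⟨ht', hx'⟩
    obtain ⟨q', hq', hx'q'⟩ := (hR _ hxq).1 a x' hx'
    obtain ⟨-, -, f, hf, rfl⟩ := ((mem_mtsQuot_may.1 hq').resolve_left (hq ·.1)).2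
    exact ⟨f (s, t) t', hf _ hstq t' ht', _, hx'q', mk_mem_quotSucc hstq ht'⟩
  · intro N hN
    obtain ⟨a, s', rfl⟩ := hS s N hN
    obtain ⟨NX, hNX, hNXR⟩ :=
      (hR _ hxq).2 (quotMust S T q t a s')
        (mem_mtsQuot_must.2 ⟨hq, _, hstq, a, s', hN, rfl⟩)
    obtain ⟨b, x', rfl⟩ := hX x NX hNX
    obtain ⟨q', ⟨rfl, -, t', hs't', ht'⟩, hx'q'⟩ := hNXR (b, x') rfl
    refine ⟨{(b, (t', x'))}, ⟨b, t', x', ht', hNX, rfl⟩, ?_⟩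
    rintro _ rfl
    exact ⟨s', rfl, q', hx'q', hs't'⟩

theorem compRelOfQuotRel_init (hS : S.init.Nonempty)
    (hR : ∀ x ∈ X.init, ∃ q ∈ (S.mtsQuot T).init, (x, q) ∈ R) :
    ∀ p ∈ (T.mtsComp X).init, ∃ s ∈ S.init, (p, s) ∈ compRelOfQuotRel R := by
  rintro ⟨t, x⟩ ⟨ht, hx⟩
  obtain ⟨s, hs⟩ := hS
  obtain ⟨q, rfl, hxq⟩ := hR x hx
  exact ⟨s, hs, _, hxq, hs, ht⟩

theorem refines_mtsComp_of_refines_mtsQuot (hS : S.init.Nonempty)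
    (hSmust : ∀ s, ∀ N ∈ S.must s, ∃ a s', N = {(a, s')})
    (hXmust : ∀ x, ∀ N ∈ X.must x, ∃ a x', N = {(a, x')})
    (h : X.Refines (S.mtsQuot T)) : (T.mtsComp X).Refines S := by
  obtain ⟨R, hR, hRinit⟩ := h
  exact ⟨compRelOfQuotRel R, refinement_compRelOfQuotRel hSmust hXmust hR,
    compRelOfQuotRel_init hS hRinit⟩

end QuotientToComposition

section CompositionToQuotient

def quotRelOfCompRel (R : Set ((T.State × X.State) × S.State)) :
    Set (X.State × Set (S.State × T.State)) :=
  {p | p.2.Finite ∧ ∀ z ∈ p.2, ((z.2, p.1), z.1) ∈ R}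

variable {R : Set ((T.State × X.State) × S.State)}

theorem exists_mem_may_of_mem_quotRelOfCompRel (hR : Refinement (T.mtsComp X) S R)
    {x x' : X.State} {a : A} (hx' : x' ∈ X.may x a) {q : Set (S.State × T.State)}
    (hxq : (x, q) ∈ quotRelOfCompRel R) :
    ∀ p ∈ q, ∀ t' ∈ T.may p.2 a, ∃ s', s' ∈ S.may p.1 a ∧ ((t', x'), s') ∈ R :=
  fun p hp t' ht' => (hR _ (hxq.2 p hp)).1 a (t', x') ⟨ht', hx'⟩

theorem quotSucc_mem_quotRelOfCompRel (hT : ∀ t a, (T.may t a).Finite)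
    {x' : X.State} {a : A} {q : Set (S.State × T.State)} (hq : q.Finite)
    {f : S.State × T.State → T.State → S.State}
    (hf : ∀ p ∈ q, ∀ t' ∈ T.may p.2 a, f p t' ∈ S.may p.1 a ∧ ((t', x'), f p t') ∈ R) :
    quotSucc S T a q f ∈ mayQ S T a q ∧ (x', quotSucc S T a q f) ∈ quotRelOfCompRel R := by
  refine ⟨quotSucc_mem_mayQ hT hq fun p hp t' ht' => (hf p hp t' ht').1,
    quotSucc_finite hT hq, ?_⟩
  rintro _ ⟨p, hp, t', ht', rfl⟩
  exact (hf p hp t' ht').2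

theorem refinement_quotRelOfCompRel
    (hSmust : ∀ s, ∀ N ∈ S.must s, ∀ p ∈ N, p.2 ∈ S.may s p.1)
    (hTfin : ∀ t a, (T.may t a).Finite)
    (hTmust : ∀ t, ∀ N ∈ T.must t, ∀ p ∈ N, p.2 ∈ T.may t p.1)
    (hXmust : ∀ x, ∀ N ∈ X.must x, ∀ p ∈ N, p.2 ∈ X.may x p.1)
    (hR : Refinement (T.mtsComp X) S R) :
    Refinement X (S.mtsQuot T) (quotRelOfCompRel R) := by
  rintro ⟨x, (q : Set (S.State × T.State))⟩ hxq
  constructor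
  · intro a x' hx'
    by_cases hq : q = ∅
    · exact ⟨(∅ : Set (S.State × T.State)), Or.inl ⟨hq, rfl⟩, Set.finite_empty,
        fun _ h => h.elim⟩
    obtain ⟨⟨s, -⟩, -⟩ := Set.nonempty_iff_ne_empty.2 hq
    have : Nonempty S.State := ⟨s⟩
    obtain ⟨f, hf⟩ := exists_choice₂ (exists_mem_may_of_mem_quotRelOfCompRel hR hx' hxq)
    obtain ⟨hmay, hrel⟩ := quotSucc_mem_quotRelOfCompRel hTfin hxq.1 hf
    exact ⟨_, Or.inr ⟨hq, hmay⟩, hrel⟩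
  · rintro _ ⟨hq, ⟨s, t⟩, hstq, a, s', hs', rfl⟩
    obtain ⟨_, ⟨b, t', x', ht', hx', rfl⟩, hN⟩ := (hR _ (hxq.2 _ hstq)).2 {(a, s')} hs'
    obtain ⟨_, hab, ht'x's'⟩ := hN (b, (t', x')) rfl
    obtain ⟨rfl, rfl⟩ := Prod.mk.inj (Set.mem_singleton_iff.1 hab).symm
    obtain ⟨f, hf, hfst⟩ := exists_choice₂_eq
      (exists_mem_may_of_mem_quotRelOfCompRel hR (hXmust x _ hx' (a, x') rfl) hxq)
      (p₀ := (s, t)) (c₀ := s') ⟨hSmust s _ hs' (a, s') rfl, ht'x's'⟩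
    obtain ⟨hmay, hrel⟩ := quotSucc_mem_quotRelOfCompRel hTfin hxq.1 hf
    have hs't' : (s', t') ∈ quotSucc S T a q f :=
      hfst ▸ mk_mem_quotSucc hstq (hTmust t _ ht' (a, t') rfl)
    refine ⟨{(a, x')}, hx', ?_⟩
    rintro _ rfl
    exact ⟨_, ⟨rfl, hmay, t', hs't', ht'⟩, hrel⟩

theorem quotRelOfCompRel_init (hS : S.init.Subsingleton) (hT : T.init.Finite)
    (hR : ∀ p ∈ (T.mtsComp X).init, ∃ s ∈ S.init, (p, s) ∈ R) :
    ∀ x ∈ X.init, ∃ q ∈ (S.mtsQuot T).init, (x, q) ∈ quotRelOfCompRel R := by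
  intro x hx
  refine ⟨_, rfl, (hS.finite.prod hT).subset fun _ h => h, ?_⟩
  rintro ⟨s, t⟩ ⟨hs, ht⟩
  obtain ⟨s', hs', hR'⟩ := hR (t, x) ⟨ht, hx⟩
  exact hS hs hs' ▸ hR'

theorem refines_mtsQuot_of_refines_mtsComp (hS : S.init.Subsingleton)
    (hSmust : ∀ s, ∀ N ∈ S.must s, ∀ p ∈ N, p.2 ∈ S.may s p.1) (hTw : T.Wellformed)
    (hXmust : ∀ x, ∀ N ∈ X.must x, ∀ p ∈ N, p.2 ∈ X.may x p.1)
    (h : (T.mtsComp X).Refines S) : X.Refines (S.mtsQuot T) := by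
  obtain ⟨R, hR, hRinit⟩ := h
  exact ⟨quotRelOfCompRel R, refinement_quotRelOfCompRel hSmust hTw.2.1 hTw.2.2 hXmust hR,
    quotRelOfCompRel_init hS hTw.1 hRinit⟩

end CompositionToQuotient

end DMTS

theorem statement17_general (A : Type) (S T X : DMTS A)
    (hSw : S.Wellformed) (hTw : T.Wellformed) (hXw : X.Wellformed)
    (hS : S.IsMTS) (hX : X.IsMTS) :
    X.Refines (S.mtsQuot T) ↔ (T.mtsComp X).Refines S := by
  obtain ⟨⟨s₀, hs₀⟩, hSmust⟩ := hS
  exact ⟨DMTS.refines_mtsComp_of_refines_mtsQuot (hs₀ ▸ Set.singleton_nonempty s₀) hSmust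
      hX.2,
    DMTS.refines_mtsQuot_of_refines_mtsComp (hs₀ ▸ Set.subsingleton_singleton) hSw.2.2 hTw
      hXw.2.2⟩

/-- the MTS quotient is right adjoint to composition:
`X ≤ₘ S / T` iff `T ‖ X ≤ₘ S`, for all MTS `S`, `T`, `X`. -/
theorem statement17 (A : Type) [Fintype A] (S T X : DMTS A)
    (hSw : S.Wellformed) (hTw : T.Wellformed) (hXw : X.Wellformed)
    (hS : S.IsMTS) (hT : T.IsMTS) (hX : X.IsMTS) :
    X.Refines (S.mtsQuot T) ↔ (T.mtsComp X).Refines S :=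
  statement17_general A S T X hSw hTw hXw hS hX
end

section
/- Every locally consistent NAA has at least one implementation: if S is an NAA such that Reach(S) ≠ ∅ and Tran(s) ≠ ∅ for every reachable state s, then ⟦S⟧ ≠ ∅. -/
/-- The reachable states of an NAA: the least set containing the initial states
and closed under taking targets of admissible transitions. -/
inductive NAA.Reach {A : Type} (S : NAA A) : S.State → Prop
  | init (s : S.State) (h : s ∈ S.init) : NAA.Reach S s
  | step (s : S.State) (hs : NAA.Reach S s) (M : Set (A × S.State))
      (hM : M ∈ S.Tran s) (p : A × S.State) (hp : p ∈ M) : NAA.Reach S p.2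

/-! Resolve the nondeterminism: choose one admissible transition set at every reachable state and
unfold these choices into an LTS on the reachable states. The relation identifying a reachable
state with itself is then a modal refinement, since each state of the LTS has exactly the chosen
transition set as its only admissible one. -/

namespace NAA

variable {A : Type} {S : NAA A}

theorem Reach.init_nonempty {s : S.State} (hs : S.Reach s) : S.init.Nonempty := by
  induction hs with
  | init s h => exact ⟨s, h⟩
  | step _ _ _ _ _ _ ih => exact ih

def choiceLTS (hfin : ∀ s, ∀ M ∈ S.Tran s, M.Finite)
    (σ : ∀ s, S.Reach s → Set (A × S.State)) (hσ : ∀ s hs, σ s hs ∈ S.Tran s)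
    (i : S.State) (hi : i ∈ S.init) : LTS A where
  State := {s // S.Reach s}
  init := ⟨i, .init i hi⟩
  trans t a := {u | (a, u.val) ∈ σ t.1 t.2}
  image_finite t a :=
    (hfin t.1 _ (hσ t.1 t.2)).preimage ((Prod.mk_right_injective a).comp Subtype.val_injective).injOn

theorem choiceLTS_mem_impl (hfin : ∀ s, ∀ M ∈ S.Tran s, M.Finite)
    (σ : ∀ s, S.Reach s → Set (A × S.State)) (hσ : ∀ s hs, σ s hs ∈ S.Tran s)
    (i : S.State) (hi : i ∈ S.init) : S.choiceLTS hfin σ hσ i hi ∈ S.impl := by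
  refine ⟨{p | p.1.val = p.2}, ?_, ?_⟩
  · rintro ⟨t, s⟩ (rfl : t.val = s) M hM
    obtain rfl : M = {p | (p.1, p.2.val) ∈ σ t.1 t.2} := hM
    refine ⟨σ t.1 t.2, hσ t.1 t.2, ?_, ?_⟩
    · rintro ⟨a, u⟩ hu
      exact ⟨(a, u.val), hu, rfl, rfl⟩
    · rintro ⟨a, u⟩ hu
      exact ⟨(a, ⟨u, .step t.1 t.2 _ (hσ t.1 t.2) (a, u) hu⟩), hu, rfl, rfl⟩
  · rintro s rfl
    exact ⟨i, hi, rfl⟩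

end NAA

theorem statement18_general (A : Type) (S : NAA A) (hw : S.Wellformed)
    (h1 : {s | S.Reach s}.Nonempty) (h2 : ∀ s, S.Reach s → (S.Tran s).Nonempty) :
    S.impl.Nonempty := by
  obtain ⟨s, hs⟩ := h1
  obtain ⟨i, hi⟩ := hs.init_nonempty
  choose σ hσ using h2
  exact ⟨_, S.choiceLTS_mem_impl hw.2 σ hσ i hi⟩

/-- every locally consistent NAA (some state is reachable, and
every reachable state has a nonempty set of admissible transition sets) has at
least one implementation. -/
theorem statement18 (A : Type) [Fintype A] (S : NAA A) (hw : S.Wellformed)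
    (h1 : {s | S.Reach s}.Nonempty) (h2 : ∀ s, S.Reach s → (S.Tran s).Nonempty) :
    S.impl.Nonempty :=
  statement18_general A S hw h1 h2
end
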